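/- arXiv:2003.04827 — 2 statements merged into one kernel-verified Lean document; each statement's English description precedes it below -/
import Mathlib

section
/- The category whose objects are polynomial functors FintypeCat ⥤ FintypeCat and whose morphisms are cartesian natural transformations is equivalent to the category whose objects are Dirichlet functors FintypeCatᵒᵖ ⥤ FintypeCat and whose morphisms are cartesian natural transformations. -/
/- STATEMENT 6: The category whose objects are polynomial functors `FintypeCat ⥤ FintypeCat`
and whose morphisms are cartesian natural transformations is equivalent to the category whose
objects are Dirichlet functors `FintypeCatᵒᵖ ⥤ FintypeCat` and whose morphisms are cartesian
natural transformations. -/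

open CategoryTheory CategoryTheory.Limits Opposite

noncomputable section

noncomputable instance (X Y : FintypeCat.{0}) : Fintype (X ⟶ Y) := by
  classical exact Fintype.ofFinite (X ⟶ Y)

/-- The finite coproduct `∐ᵢ Fin(kᵢ, –)` of corepresentable functors `FintypeCat ⥤ FintypeCat`. -/
def polySum {I : Type} [Fintype I] (k : I → FintypeCat.{0}) :
    FintypeCat.{0} ⥤ FintypeCat.{0} where
  obj X := FintypeCat.of (Σ i, (k i ⟶ X))
  map f := FintypeCat.homMk (fun x => ⟨x.1, x.2 ≫ f⟩)

/-- The finite coproduct `∐ᵢ Fin(–, dᵢ)` of representable presheaves `FintypeCatᵒᵖ ⥤ FintypeCat`. -/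
def dirichletSum {I : Type} [Fintype I] (d : I → FintypeCat.{0}) :
    FintypeCat.{0}ᵒᵖ ⥤ FintypeCat.{0} where
  obj X := FintypeCat.of (Σ i, (X.unop ⟶ d i))
  map f := FintypeCat.homMk (fun x => ⟨x.1, f.unop ≫ x.2⟩)

/-- A polynomial functor is a finite coproduct of corepresentables. -/
def IsPolynomial (P : FintypeCat.{0} ⥤ FintypeCat.{0}) : Prop :=
  ∃ (I : Type) (_ : Fintype I) (k : I → FintypeCat.{0}), Nonempty (P ≅ polySum k)

/-- A Dirichlet functor is a finite coproduct of representable presheaves. -/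
def IsDirichlet (D : FintypeCat.{0}ᵒᵖ ⥤ FintypeCat.{0}) : Prop :=
  ∃ (I : Type) (_ : Fintype I) (d : I → FintypeCat.{0}), Nonempty (D ≅ dirichletSum d)

/-- A natural transformation is cartesian when all of its naturality squares are pullbacks. -/
def Cartesian {C D : Type*} [Category C] [Category D] {F G : C ⥤ D} (f : F ⟶ G) : Prop :=
  ∀ ⦃X Y : C⦄ (g : X ⟶ Y), IsPullback (f.app X) (F.map g) (G.map g) (f.app Y)

/-- Objects: polynomial functors. -/
structure PolyCart where
  func : FintypeCat.{0} ⥤ FintypeCat.{0}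
  isPoly : IsPolynomial func

/-- Objects: Dirichlet functors. -/
structure DirCart where
  func : FintypeCat.{0}ᵒᵖ ⥤ FintypeCat.{0}
  isDir : IsDirichlet func

/-- The category of polynomial functors and cartesian natural transformations. -/
instance : Category PolyCart where
  Hom A B := {f : A.func ⟶ B.func // Cartesian f}
  id A := ⟨𝟙 A.func, fun X Y g => by
    simp only [NatTrans.id_app]
    exact IsPullback.of_horiz_isIso ⟨by simp⟩⟩
  comp f g := ⟨f.1 ≫ g.1, fun X Y h => by
    simp only [NatTrans.comp_app]
    exact (f.2 h).paste_horiz (g.2 h)⟩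
  id_comp f := Subtype.ext (Category.id_comp _)
  comp_id f := Subtype.ext (Category.comp_id _)
  assoc f g h := Subtype.ext (Category.assoc _ _ _)

/-- The category of Dirichlet functors and cartesian natural transformations. -/
instance : Category DirCart where
  Hom A B := {f : A.func ⟶ B.func // Cartesian f}
  id A := ⟨𝟙 A.func, fun X Y g => by
    simp only [NatTrans.id_app]
    exact IsPullback.of_horiz_isIso ⟨by simp⟩⟩
  comp f g := ⟨f.1 ≫ g.1, fun X Y h => by
    simp only [NatTrans.comp_app]
    exact (f.2 h).paste_horiz (g.2 h)⟩
  id_comp f := Subtype.ext (Category.id_comp _)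
  comp_id f := Subtype.ext (Category.comp_id _)
  assoc f g h := Subtype.ext (Category.assoc _ _ _)

/-! Both categories are equivalent to the category of finite families `(kᵢ)_{i ∈ I}` of finite
sets, where a morphism `(kᵢ)_I ⟶ (k'ⱼ)_J` assigns to each `i` an index `j` and an isomorphism
`k'ⱼ ≅ kᵢ`. By Yoneda, a natural transformation `∐ᵢ Fin(kᵢ, –) ⟶ ∐ⱼ Fin(k'ⱼ, –)` is the same as a
choice, for every `i`, of some `j` and a map `k'ⱼ ⟶ kᵢ`; it is cartesian exactly when all these
maps are isomorphisms. The Dirichlet side is the same with the arrows reversed. -/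

universe u

lemma FintypeCat.isPullback_iff {X₁ X₂ X₃ X₄ : FintypeCat.{u}} (t : X₁ ⟶ X₂) (l : X₁ ⟶ X₃)
    (r : X₂ ⟶ X₄) (b : X₃ ⟶ X₄) :
    IsPullback t l r b ↔ t ≫ r = l ≫ b ∧
      (∀ x₁ y₁, t x₁ = t y₁ ∧ l x₁ = l y₁ → x₁ = y₁) ∧
      ∀ x₂ x₃, r x₂ = b x₃ → ∃ x₁, t x₁ = x₂ ∧ l x₁ = x₃ := by
  refine ⟨fun h => ⟨h.w, ((Types.isPullback_iff _ _ _ _).1 (h.map incl)).2⟩, fun ⟨w, h⟩ => ?_⟩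
  exact (IsPullback.map_iff incl w).1 ((Types.isPullback_iff _ _ _ _).2 ⟨incl.congr_map w, h⟩)

lemma cartesian_of_isIso {C D : Type*} [Category C] [Category D] {F G : C ⥤ D} (α : F ⟶ G)
    [IsIso α] : Cartesian α :=
  fun _ _ g => IsPullback.of_horiz_isIso ⟨(α.naturality g).symm⟩

def PolyCart.isoMk {P Q : PolyCart} (α : P.func ≅ Q.func) : P ≅ Q where
  hom := ⟨α.hom, cartesian_of_isIso α.hom⟩
  inv := ⟨α.inv, cartesian_of_isIso α.inv⟩
  hom_inv_id := Subtype.ext α.hom_inv_id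
  inv_hom_id := Subtype.ext α.inv_hom_id

def DirCart.isoMk {P Q : DirCart} (α : P.func ≅ Q.func) : P ≅ Q where
  hom := ⟨α.hom, cartesian_of_isIso α.hom⟩
  inv := ⟨α.inv, cartesian_of_isIso α.inv⟩
  hom_inv_id := Subtype.ext α.hom_inv_id
  inv_hom_id := Subtype.ext α.inv_hom_id

structure FinFamily where
  I : Type
  [fintype : Fintype I]
  k : I → FintypeCat.{0}

namespace FinFamily

attribute [instance] fintype

instance : Category FinFamily where
  Hom A B := ∀ i : A.I, Σ j : B.I, B.k j ≅ A.k i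
  id _ i := ⟨i, Iso.refl _⟩
  comp f g i := ⟨(g (f i).1).1, (g (f i).1).2 ≪≫ (f i).2⟩
  id_comp f := by funext i; simp
  comp_id f := by funext i; simp
  assoc f g h := by funext i; simp

variable {A B : FinFamily}

def polyMap (f : A ⟶ B) : polySum A.k ⟶ polySum B.k where
  app _ := FintypeCat.homMk fun x => ⟨(f x.1).1, (f x.1).2.hom ≫ x.2⟩

lemma polyMap_cartesian (f : A ⟶ B) : Cartesian (polyMap f) := by
  intro X Y h
  refine (FintypeCat.isPullback_iff _ _ _ _).2 ⟨rfl, ?_, ?_⟩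
  · rintro ⟨i, u⟩ ⟨i', u'⟩ ⟨hα, hh⟩
    obtain ⟨rfl, -⟩ := Sigma.mk.inj_iff.mp hh
    exact congrArg (Sigma.mk i) ((cancel_epi _).1 (eq_of_heq (Sigma.mk.inj_iff.mp hα).2))
  · rintro ⟨j, u⟩ ⟨i, v⟩ huv
    obtain ⟨rfl, huv⟩ := Sigma.mk.inj_iff.mp huv
    refine ⟨⟨i, (f i).2.inv ≫ u⟩, congrArg (Sigma.mk _) (by simp), congrArg (Sigma.mk i) ?_⟩
    rw [Category.assoc, eq_of_heq huv, Iso.inv_hom_id_assoc]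

def toPoly : FinFamily ⥤ PolyCart where
  obj A := ⟨polySum A.k, A.I, A.fintype, A.k, ⟨Iso.refl _⟩⟩
  map f := ⟨polyMap f, polyMap_cartesian f⟩

lemma polySum_natTrans_app_mk (α : polySum A.k ⟶ polySum B.k) {X : FintypeCat} (i : A.I)
    (u : A.k i ⟶ X) :
    α.app X ⟨i, u⟩ = ⟨(α.app (A.k i) ⟨i, 𝟙 _⟩).1, (α.app (A.k i) ⟨i, 𝟙 _⟩).2 ≫ u⟩ :=
  ConcreteCategory.congr_hom (α.naturality u) ⟨i, 𝟙 _⟩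

/-- Cartesianness at the naturality square of `g := (α.app _ ⟨i, 𝟙⟩).2` lifts the pair
`(⟨_, 𝟙⟩, ⟨i, 𝟙⟩)` to an element `⟨i, w⟩` with `w` inverse to `g`. -/
lemma isIso_polySum_natTrans_app_id {α : polySum A.k ⟶ polySum B.k} (hα : Cartesian α)
    (i : A.I) : IsIso (α.app (A.k i) ⟨i, 𝟙 _⟩).2 := by
  set x := α.app (A.k i) ⟨i, 𝟙 _⟩ with hx
  obtain ⟨-, -, hex⟩ := (FintypeCat.isPullback_iff _ _ _ _).1 (hα x.2)
  obtain ⟨⟨i', w⟩, hw₁, hw₂⟩ :=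
    hex ⟨x.1, 𝟙 _⟩ ⟨i, 𝟙 _⟩ (congrArg (Sigma.mk x.1) (Category.id_comp _))
  obtain ⟨rfl, hw₂⟩ : i' = i ∧ w ≫ x.2 ≍ 𝟙 _ := Sigma.mk.inj_iff.mp hw₂
  rw [polySum_natTrans_app_mk, ← hx] at hw₁
  exact ⟨w, eq_of_heq (Sigma.mk.inj_iff.mp hw₁).2, eq_of_heq hw₂⟩

def toPolyFullyFaithful : toPoly.FullyFaithful where
  preimage {A _} α i :=
    have := isIso_polySum_natTrans_app_id α.2 i
    ⟨_, asIso (α.1.app (A.k i) ⟨i, 𝟙 _⟩).2⟩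
  map_preimage α := Subtype.ext <| NatTrans.ext <| funext fun _ =>
    FintypeCat.hom_ext _ _ fun ⟨i, u⟩ => (polySum_natTrans_app_mk α.1 i u).symm
  preimage_map _ := funext fun _ => Sigma.ext rfl (heq_of_eq (Iso.ext (Category.comp_id _)))

instance : toPoly.EssSurj where
  mem_essImage := fun ⟨_, I, _, k, ⟨e⟩⟩ => ⟨⟨I, k⟩, ⟨PolyCart.isoMk e.symm⟩⟩

instance : toPoly.IsEquivalence where
  faithful := toPolyFullyFaithful.faithful
  full := toPolyFullyFaithful.full

def dirMap (f : A ⟶ B) : dirichletSum A.k ⟶ dirichletSum B.k where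
  app _ := FintypeCat.homMk fun x => ⟨(f x.1).1, x.2 ≫ (f x.1).2.inv⟩

lemma dirMap_cartesian (f : A ⟶ B) : Cartesian (dirMap f) := by
  intro X Y h
  refine (FintypeCat.isPullback_iff _ _ _ _).2 ⟨rfl, ?_, ?_⟩
  · rintro ⟨i, u⟩ ⟨i', u'⟩ ⟨hα, hh⟩
    obtain ⟨rfl, -⟩ := Sigma.mk.inj_iff.mp hh
    exact congrArg (Sigma.mk i) ((cancel_mono _).1 (eq_of_heq (Sigma.mk.inj_iff.mp hα).2))
  · rintro ⟨j, u⟩ ⟨i, v⟩ huv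
    obtain ⟨rfl, huv⟩ := Sigma.mk.inj_iff.mp huv
    refine ⟨⟨i, u ≫ (f i).2.hom⟩, congrArg (Sigma.mk _) (by simp), congrArg (Sigma.mk i) ?_⟩
    rw [← Category.assoc, eq_of_heq huv, Category.assoc, Iso.inv_hom_id, Category.comp_id]

def toDir : FinFamily ⥤ DirCart where
  obj A := ⟨dirichletSum A.k, A.I, A.fintype, A.k, ⟨Iso.refl _⟩⟩
  map f := ⟨dirMap f, dirMap_cartesian f⟩

lemma dirichletSum_natTrans_app_mk (α : dirichletSum A.k ⟶ dirichletSum B.k) {X : FintypeCat}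
    (i : A.I) (u : X ⟶ A.k i) :
    α.app (op X) ⟨i, u⟩ = ⟨(α.app (op (A.k i)) ⟨i, 𝟙 _⟩).1, u ≫ (α.app (op (A.k i)) ⟨i, 𝟙 _⟩).2⟩ :=
  ConcreteCategory.congr_hom (α.naturality u.op) ⟨i, 𝟙 _⟩

lemma isIso_dirichletSum_natTrans_app_id {α : dirichletSum A.k ⟶ dirichletSum B.k}
    (hα : Cartesian α) (i : A.I) : IsIso (α.app (op (A.k i)) ⟨i, 𝟙 _⟩).2 := by
  set x := α.app (op (A.k i)) ⟨i, 𝟙 _⟩ with hx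
  obtain ⟨-, -, hex⟩ := (FintypeCat.isPullback_iff _ _ _ _).1 (hα x.2.op)
  obtain ⟨⟨i', w⟩, hw₁, hw₂⟩ :=
    hex ⟨x.1, 𝟙 _⟩ ⟨i, 𝟙 _⟩ (congrArg (Sigma.mk x.1) (Category.comp_id _))
  obtain ⟨rfl, hw₂⟩ : i' = i ∧ x.2 ≫ w ≍ 𝟙 _ := Sigma.mk.inj_iff.mp hw₂
  rw [dirichletSum_natTrans_app_mk, ← hx] at hw₁
  exact ⟨w, eq_of_heq hw₂, eq_of_heq (Sigma.mk.inj_iff.mp hw₁).2⟩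

def toDirFullyFaithful : toDir.FullyFaithful where
  preimage {A _} α i :=
    have := isIso_dirichletSum_natTrans_app_id α.2 i
    ⟨_, (asIso (α.1.app (op (A.k i)) ⟨i, 𝟙 _⟩).2).symm⟩
  map_preimage α := Subtype.ext <| NatTrans.ext <| funext fun _ =>
    FintypeCat.hom_ext _ _ fun ⟨i, u⟩ => (dirichletSum_natTrans_app_mk α.1 i u).symm
  preimage_map f := funext fun i => Sigma.ext rfl <| heq_of_eq <| Iso.ext <|
    Iso.inv_ext ((Category.id_comp _ =≫ _).trans (f i).2.inv_hom_id)

instance : toDir.EssSurj where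
  mem_essImage := fun ⟨_, I, _, d, ⟨e⟩⟩ => ⟨⟨I, d⟩, ⟨DirCart.isoMk e.symm⟩⟩

instance : toDir.IsEquivalence where
  faithful := toDirFullyFaithful.faithful
  full := toDirFullyFaithful.full

end FinFamily

theorem polyCart_equivalence_dirCart : Nonempty (PolyCart ≌ DirCart) :=
  ⟨FinFamily.toPoly.asEquivalence.symm.trans FinFamily.toDir.asEquivalence⟩
end
end

section
/- Categorical products in Poly agree with the algebraic product of polynomials: for finite coproducts of corepresentables P = ∐_{i ∈ I} Fin(pᵢ, –) and Q = ∐_{j ∈ J} Fin(qⱼ, –), the product P × Q in the functor category FintypeCat ⥤ FintypeCat is isomorphic to ∐_{(i,j) ∈ I × J} Fin(pᵢ + qⱼ, –); in particular the product of two polynomial functors is again a polynomial functor. -/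
/- STATEMENT 17: Categorical products in `Poly` agree with the algebraic product of
polynomials: for `P = ∐_{i ∈ I} Fin(pᵢ, –)` and `Q = ∐_{j ∈ J} Fin(qⱼ, –)`, the product
`P × Q` in the functor category `FintypeCat ⥤ FintypeCat` is isomorphic to
`∐_{(i,j) ∈ I × J} Fin(pᵢ + qⱼ, –)`; in particular the product of two polynomial functors is
again a polynomial functor. -/

open CategoryTheory CategoryTheory.Limits Opposite

noncomputable section

/-
An element `(i, a : pᵢ ⟶ X)` of `polySum p X` together with an element `(j, b : qⱼ ⟶ X)` of
`polySum q X` is the same thing as the single element `((i, j), [a, b] : pᵢ ⊕ qⱼ ⟶ X)` of the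
candidate product, naturally in `X`. Hence the candidate, with the two restrictions along
`Sum.inl` and `Sum.inr` as projections, is a product cone.
-/

namespace PolySum

section

variable {I J : Type} (p : I → FintypeCat.{0}) (q : J → FintypeCat.{0}) (X : FintypeCat.{0})

def sigmaHomProdEquiv :
    (Σ i, (p i ⟶ X)) × (Σ j, (q j ⟶ X)) ≃
      Σ ij : I × J, (FintypeCat.of (p ij.1 ⊕ q ij.2) ⟶ X) where
  toFun x := ⟨(x.1.1, x.2.1), FintypeCat.homMk (Sum.elim x.1.2 x.2.2)⟩
  invFun y :=
    (⟨y.1.1, FintypeCat.homMk (y.2 ∘ Sum.inl)⟩, ⟨y.1.2, FintypeCat.homMk (y.2 ∘ Sum.inr)⟩)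
  left_inv _ := rfl
  right_inv := by
    rintro ⟨ij, f⟩
    refine Sigma.ext rfl (heq_of_eq (FintypeCat.hom_ext _ _ ?_))
    rintro (a | b) <;> rfl

variable {p q X}

lemma sigmaHomProdEquiv_comp {Y : FintypeCat.{0}} (f : X ⟶ Y)
    (x : (Σ i, (p i ⟶ X)) × (Σ j, (q j ⟶ X))) :
    sigmaHomProdEquiv p q Y (⟨x.1.1, x.1.2 ≫ f⟩, ⟨x.2.1, x.2.2 ≫ f⟩) =
      ⟨(sigmaHomProdEquiv p q X x).1, (sigmaHomProdEquiv p q X x).2 ≫ f⟩ := by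
  refine Sigma.ext rfl (heq_of_eq (FintypeCat.hom_ext _ _ ?_))
  rintro (a | b) <;> rfl

end

variable {I J : Type} [Fintype I] [Fintype J] (p : I → FintypeCat.{0}) (q : J → FintypeCat.{0})

def fst : polySum (fun ij : I × J => FintypeCat.of (p ij.1 ⊕ q ij.2)) ⟶ polySum p where
  app X := FintypeCat.homMk fun y => ((sigmaHomProdEquiv p q X).symm y).1

def snd : polySum (fun ij : I × J => FintypeCat.of (p ij.1 ⊕ q ij.2)) ⟶ polySum q where
  app X := FintypeCat.homMk fun y => ((sigmaHomProdEquiv p q X).symm y).2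

def prodFan : BinaryFan (polySum p) (polySum q) := BinaryFan.mk (fst p q) (snd p q)

def prodLift (s : BinaryFan (polySum p) (polySum q)) :
    s.pt ⟶ polySum (fun ij : I × J => FintypeCat.of (p ij.1 ⊕ q ij.2)) where
  app X := FintypeCat.homMk fun x => sigmaHomProdEquiv p q X (s.fst.app X x, s.snd.app X x)
  naturality X Y f := FintypeCat.hom_ext _ _ fun x => by
    have hfst : s.fst.app Y (s.pt.map f x) = (polySum p).map f (s.fst.app X x) :=
      ConcreteCategory.congr_hom (s.fst.naturality f) x
    have hsnd : s.snd.app Y (s.pt.map f x) = (polySum q).map f (s.snd.app X x) :=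
      ConcreteCategory.congr_hom (s.snd.naturality f) x
    change sigmaHomProdEquiv p q Y (s.fst.app Y (s.pt.map f x), s.snd.app Y (s.pt.map f x)) = _
    rw [hfst, hsnd]
    exact sigmaHomProdEquiv_comp f (s.fst.app X x, s.snd.app X x)

def isLimitProdFan : IsLimit (prodFan p q) :=
  BinaryFan.isLimitMk (prodLift p q) (fun _ => rfl) (fun _ => rfl) fun s m hfst hsnd => by
    ext X x
    refine ((sigmaHomProdEquiv p q X).symm_apply_eq).mp (Prod.ext ?_ ?_)
    · exact ConcreteCategory.congr_hom (NatTrans.congr_app hfst X) x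
    · exact ConcreteCategory.congr_hom (NatTrans.congr_app hsnd X) x

def prodIso :
    polySum p ⨯ polySum q ≅ polySum (fun ij : I × J => FintypeCat.of (p ij.1 ⊕ q ij.2)) :=
  (limit.isLimit _).conePointUniqueUpToIso (isLimitProdFan p q)

end PolySum

theorem polynomial_products
    {I J : Type} [Fintype I] [Fintype J] (p : I → FintypeCat.{0}) (q : J → FintypeCat.{0}) :
    Nonempty
      (polySum p ⨯ polySum q ≅
        polySum (fun ij : I × J => FintypeCat.of (p ij.1 ⊕ q ij.2))) ∧
    ∀ (P Q : FintypeCat.{0} ⥤ FintypeCat.{0}),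
      IsPolynomial P → IsPolynomial Q → IsPolynomial (P ⨯ Q) := by
  refine ⟨⟨PolySum.prodIso p q⟩, ?_⟩
  rintro P Q ⟨I', _, p', ⟨eP⟩⟩ ⟨J', _, q', ⟨eQ⟩⟩
  exact ⟨I' × J', inferInstance, _, ⟨prod.mapIso eP eQ ≪≫ PolySum.prodIso p' q'⟩⟩
end
end
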